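/- Let n be even and let T₁, T₂ be distinct n × n bibifix-free matrices. Then ψ(T₁) and ψ(T₂) are disjoint, and every (n+1) × (n+1) bibifix-free matrix lies in ψ(T) for some n × n bibifix-free matrix T; i.e., {ψ(T) : T ∈ BBF_n^q} is a partition of BBF_{n+1}^q. -/
import Mathlib


def topLeft {α : Type*} {n : ℕ} (T : Matrix (Fin n) (Fin n) α) (r : ℕ) (h : r ≤ n) :
    Matrix (Fin r) (Fin r) α :=
  fun a b => T (Fin.castLE h a) (Fin.castLE h b)

def botRight {α : Type*} {n : ℕ} (T : Matrix (Fin n) (Fin n) α) (r : ℕ) (h : r ≤ n) :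
    Matrix (Fin r) (Fin r) α :=
  fun a b => T ⟨n - r + a, by have := a.isLt; omega⟩ ⟨n - r + b, by have := b.isLt; omega⟩

def BibifixFree {α : Type*} {n : ℕ} (T : Matrix (Fin n) (Fin n) α) : Prop :=
  ∀ (r : ℕ) (_ : 1 ≤ r) (h2 : r < n), topLeft T r h2.le ≠ botRight T r h2.le

def insIdx (n : ℕ) (i : Fin (n + 1)) (h : (i : ℕ) ≠ n / 2) : Fin n :=
  if hl : (i : ℕ) < n / 2 then ⟨i, by have := Nat.div_le_self n 2; omega⟩
  else ⟨(i : ℕ) - 1, by have := i.isLt; omega⟩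

def InPsi {α : Type*} {n : ℕ} (T : Matrix (Fin n) (Fin n) α)
    (T' : Matrix (Fin (n + 1)) (Fin (n + 1)) α) : Prop :=
  ∀ (i j : Fin (n + 1)) (hi : (i : ℕ) ≠ n / 2) (hj : (j : ℕ) ≠ n / 2),
    T' i j = T (insIdx n i hi) (insIdx n j hj)

/-- Embedding of `Fin n` into `Fin (n+1)` skipping the middle index `n/2`. -/
def emb (n : ℕ) (a : Fin n) : Fin (n + 1) :=
  if (a : ℕ) < n / 2 then ⟨a, by have := a.isLt; omega⟩
  else ⟨(a : ℕ) + 1, by have := a.isLt; omega⟩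

lemma emb_val (n : ℕ) (a : Fin n) :
    ((emb n a : Fin (n + 1)) : ℕ) = if (a : ℕ) < n / 2 then (a : ℕ) else (a : ℕ) + 1 := by
  unfold emb; split <;> simp

lemma emb_ne (n : ℕ) (a : Fin n) : ((emb n a : Fin (n + 1)) : ℕ) ≠ n / 2 := by
  rw [emb_val]; split <;> omega

lemma insIdx_val (n : ℕ) (i : Fin (n + 1)) (h : (i : ℕ) ≠ n / 2) :
    ((insIdx n i h : Fin n) : ℕ) = if (i : ℕ) < n / 2 then (i : ℕ) else (i : ℕ) - 1 := by
  unfold insIdx; split <;> simp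

lemma insIdx_emb {n : ℕ} (a : Fin n) (h : ((emb n a : Fin (n + 1)) : ℕ) ≠ n / 2) :
    insIdx n (emb n a) h = a := by
  apply Fin.ext
  rw [insIdx_val]
  have hv := emb_val n a
  split at hv <;> rw [hv] <;> split_ifs <;> omega

lemma emb_insIdx {n : ℕ} (i : Fin (n + 1)) (hi : (i : ℕ) ≠ n / 2) :
    emb n (insIdx n i hi) = i := by
  apply Fin.ext
  rw [emb_val, insIdx_val]
  have := i.isLt
  split_ifs <;> omega

/-- 2D period predicate. -/
def Per {α : Type*} {n : ℕ} (T : Matrix (Fin n) (Fin n) α) (p : ℕ) : Prop :=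
  ∀ (i j : Fin n) (hi : (i : ℕ) + p < n) (hj : (j : ℕ) + p < n),
    T i j = T ⟨(i : ℕ) + p, hi⟩ ⟨(j : ℕ) + p, hj⟩

lemma per_double {α : Type*} {n : ℕ} {T : Matrix (Fin n) (Fin n) α} {p : ℕ}
    (h : Per T p) : Per T (2 * p) := by
  intro i j hi hj
  have h1 := h i j (by omega) (by omega)
  have h2 := h ⟨(i : ℕ) + p, by omega⟩ ⟨(j : ℕ) + p, by omega⟩ (by simp; omega) (by simp; omega)
  rw [h1, h2]
  congr 1 <;> apply Fin.ext <;> simp <;> omega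

lemma per_small {α : Type*} {n : ℕ} (T : Matrix (Fin n) (Fin n) α) :
    ∀ k p, n - p ≤ k → 1 ≤ p → p < n → Per T p →
    ∃ p', n ≤ 2 * p' ∧ p' < n ∧ Per T p' := by
  intro k
  induction k with
  | zero => intro p h h1 h2 _; omega
  | succ k ih =>
    intro p h h1 h2 hp
    by_cases hc : n ≤ 2 * p
    · exact ⟨p, hc, h2, hp⟩
    · exact ih (2 * p) (by omega) (by omega) (by omega) (per_double hp)

lemma border_to_per {α : Type*} {n r : ℕ} (T : Matrix (Fin n) (Fin n) α) (hr2 : r < n)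
    (heq : topLeft T r hr2.le = botRight T r hr2.le) : Per T (n - r) := by
  intro i j hi hj
  have := congrFun (congrFun heq ⟨(i : ℕ), by omega⟩) ⟨(j : ℕ), by omega⟩
  simp only [topLeft, botRight] at this
  convert this using 2 <;> apply Fin.ext <;> simp [Fin.castLE] <;> omega

lemma per_lift {α : Type*} {n : ℕ} (T' : Matrix (Fin (n + 1)) (Fin (n + 1)) α) {p' : ℕ}
    (hp1 : n ≤ 2 * p') (hp2 : p' < n)
    (hper : Per (fun a b : Fin n => T' (emb n a) (emb n b)) p') :
    topLeft T' (n - p') (by omega) = botRight T' (n - p') (by omega) := by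
  funext a b
  have ha : (a : ℕ) < n - p' := a.isLt
  have hb : (b : ℕ) < n - p' := b.isLt
  have key := hper ⟨(a : ℕ), by omega⟩ ⟨(b : ℕ), by omega⟩ (by simp; omega) (by simp; omega)
  simp only at key
  have embL : ∀ (c : ℕ) (hc : c < n - p') (h : c < n),
      emb n ⟨c, h⟩ = ⟨c, by omega⟩ := by
    intro c hc h
    have : c < n / 2 := by omega
    simp [emb, this]
  have embR : ∀ (c : ℕ) (hc : c < n - p') (h : c + p' < n),
      emb n ⟨c + p', h⟩ = ⟨c + p' + 1, by omega⟩ := by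
    intro c hc h
    have : ¬ (c + p' < n / 2) := by omega
    simp [emb, this]
  rw [embL _ ha, embL _ hb, embR _ ha, embR _ hb] at key
  simp only [topLeft, botRight]
  convert key using 2 <;> apply Fin.ext <;> simp [Fin.castLE] <;> omega

theorem stmt_6 {q n : ℕ} (hn : Even n) :
    (∀ T₁ T₂ : Matrix (Fin n) (Fin n) (Fin q), BibifixFree T₁ → BibifixFree T₂ → T₁ ≠ T₂ →
      ∀ T' : Matrix (Fin (n + 1)) (Fin (n + 1)) (Fin q), ¬(InPsi T₁ T' ∧ InPsi T₂ T')) ∧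
    (∀ T' : Matrix (Fin (n + 1)) (Fin (n + 1)) (Fin q), BibifixFree T' →
      ∃ T : Matrix (Fin n) (Fin n) (Fin q), BibifixFree T ∧ InPsi T T') := by
  constructor
  · rintro T₁ T₂ _ _ hne T' ⟨hP1, hP2⟩
    apply hne
    funext a b
    have e1 := hP1 (emb n a) (emb n b) (emb_ne n a) (emb_ne n b)
    have e2 := hP2 (emb n a) (emb n b) (emb_ne n a) (emb_ne n b)
    rw [insIdx_emb, insIdx_emb] at e1 e2
    exact e1.symm.trans e2
  · intro T' hT'
    refine ⟨fun a b => T' (emb n a) (emb n b), ?_, ?_⟩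
    · intro r hr1 hr2 heq
      have per := border_to_per _ hr2 heq
      obtain ⟨p', hp1, hp2, hper⟩ :=
        per_small _ (n - (n - r)) (n - r) (by omega) (by omega) (by omega) per
      exact hT' (n - p') (by omega) (by omega) (per_lift T' hp1 hp2 hper)
    · intro i j hi hj
      show T' i j = T' (emb n (insIdx n i hi)) (emb n (insIdx n j hj))
      rw [emb_insIdx, emb_insIdx]
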